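/- Let T be a tree rooted at r with a shadow-closed link set E that covers T. Then there exists a minimum-cardinality feasible set F ⊆ E such that exactly one link of F is incident to each leaf of T; consequently, the links of F having both endpoints in L form a matching on the leaves. -/

import Mathlib

open scoped Classical

/-- The set of tree edges lying on a path (necessarily the unique one in a tree)
between `u` and `v`. -/
def pathEdges {V : Type*} (T : SimpleGraph V) (u v : V) : Set (Sym2 V) :=
  {e | ∃ p : T.Walk u v, p.IsPath ∧ e ∈ p.edges}

/-- The set of vertices lying on a path between `u` and `v`. -/
def pathSupport {V : Type*} (T : SimpleGraph V) (u v : V) : Set V :=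
  {w | ∃ p : T.Walk u v, p.IsPath ∧ w ∈ p.support}

/-- The link `l` covers the tree edge `e` : `e` lies on the tree path between the
endpoints of `l`. -/
def Covers {V : Type*} (T : SimpleGraph V) (l e : Sym2 V) : Prop :=
  ∃ u v, l = s(u, v) ∧ e ∈ pathEdges T u v

/-- A set `F` of links covers the tree `T` (is feasible): every edge of `T` is covered
by some link of `F`. -/
def CoversTree {V : Type*} (T : SimpleGraph V) (F : Set (Sym2 V)) : Prop :=
  ∀ e ∈ T.edgeSet, ∃ l ∈ F, Covers T l e

/-- `x` belongs to the subtree `T_v` of `T` rooted at `r`: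
`v` lies on the tree path from `x` to the root `r`. -/
def InSubtree {V : Type*} (T : SimpleGraph V) (r v x : V) : Prop :=
  v ∈ pathSupport T x r

/-- A leaf is a vertex with exactly one neighbour (degree one). -/
def IsLeaf {V : Type*} (T : SimpleGraph V) (v : V) : Prop :=
  ∃! w, T.Adj v w

/-- `y` is the parent of `x` in the tree `T` rooted at `r`. -/
def IsParent {V : Type*} (T : SimpleGraph V) (r x y : V) : Prop :=
  T.Adj x y ∧ InSubtree T r y x

/-- `w` is the least common ancestor of `u` and `v` in the tree `T` rooted at `r`. -/
def IsLCA {V : Type*} (T : SimpleGraph V) (r u v w : V) : Prop :=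
  w ∈ pathSupport T u v ∧ w ∈ pathSupport T u r ∧ w ∈ pathSupport T v r

/-- The link `cd` is a shadow of the link `ab`: the tree path between `c` and `d` is a
strict subpath of the tree path between `a` and `b`. -/
def IsShadow {V : Type*} (T : SimpleGraph V) (c d a b : V) : Prop :=
  c ≠ d ∧ pathEdges T c d ⊂ pathEdges T a b

/-- The link set `E` is shadow-closed: every shadow of a link of `E` belongs to `E`. -/
def ShadowClosed {V : Type*} (T : SimpleGraph V) (E : Finset (Sym2 V)) : Prop :=
  ∀ a b c d, s(a, b) ∈ E → IsShadow T c d a b → s(c, d) ∈ E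

/-- `F ⊆ E` is a shadows-minimal feasible solution: it is a minimum-cardinality cover of
`T` among subsets of `E`, and replacing any link of `F` by one of its shadows renders it
infeasible. -/
def ShadowsMinimal {V : Type*} (T : SimpleGraph V) (E F : Finset (Sym2 V)) : Prop :=
  F ⊆ E ∧ CoversTree T ↑F ∧
    (∀ F' : Finset (Sym2 V), F' ⊆ E → CoversTree T ↑F' → F.card ≤ F'.card) ∧
    ∀ a b c d, s(a, b) ∈ F → IsShadow T c d a b →
      ¬ CoversTree T ↑(insert s(c, d) (F.erase s(a, b)))

/-- `deg_F(x)`: the number of links of `F` incident to `x`. -/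
noncomputable def degF {V : Type*} (F : Finset (Sym2 V)) (x : V) : ℕ :=
  (F.filter (fun e => x ∈ e)).card

/-- `s` is a stem with twin link `ab`: an internal vertex whose children are exactly the
two leaves `a` and `b`, with `ab ∈ E`. -/
def IsStem {V : Type*} (T : SimpleGraph V) (r : V) (E : Finset (Sym2 V)) (s a b : V) : Prop :=
  a ≠ b ∧ ¬ IsLeaf T s ∧ IsLeaf T a ∧ IsLeaf T b ∧
    IsParent T r a s ∧ IsParent T r b s ∧
    (∀ x, IsParent T r x s → x = a ∨ x = b) ∧ s(a, b) ∈ E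

/-- The subtree `T_v` is `x`-closed: every link of `E` incident to `x` has both endpoints
in `T_v`. -/
def XClosed {V : Type*} (T : SimpleGraph V) (r : V) (E : Finset (Sym2 V)) (v x : V) : Prop :=
  ∀ l ∈ E, x ∈ l → ∀ y ∈ l, InSubtree T r v y

/-- The subtree `T_v` is leaf-closed: it is `x`-closed for every leaf `x ∈ L_v`. -/
def LeafClosed {V : Type*} (T : SimpleGraph V) (r : V) (E : Finset (Sym2 V)) (v : V) : Prop :=
  ∀ x, IsLeaf T x → InSubtree T r v x → XClosed T r E v x

/-- The subtree `T_v` is minimally leaf-closed: it is leaf-closed and no subtree rooted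
at a strict descendant of `v` is leaf-closed. -/
def MinLeafClosed {V : Type*} (T : SimpleGraph V) (r : V) (E : Finset (Sym2 V)) (v : V) : Prop :=
  LeafClosed T r E v ∧ ∀ u, InSubtree T r v u → u ≠ v → ¬ LeafClosed T r E u

/-- `ax` is an up-link of the leaf `a`: a link of `E` incident to `a` whose least common
ancestor with `a` is closest to the root among all links of `E` incident to `a`. -/
def IsUpLink {V : Type*} (T : SimpleGraph V) (r : V) (E : Finset (Sym2 V)) (a x : V) : Prop :=
  s(a, x) ∈ E ∧ ∀ y w w', s(a, y) ∈ E → IsLCA T r a x w → IsLCA T r a y w' →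
    T.dist w r ≤ T.dist w' r

/-- A matching: a set of links (pairs of distinct vertices) no two of which share an
endpoint. -/
def IsMatching {V : Type*} (M : Finset (Sym2 V)) : Prop :=
  (∀ l ∈ M, ¬ l.IsDiag) ∧ ∀ l ∈ M, ∀ l' ∈ M, l ≠ l' → ∀ x, x ∈ l → x ∉ l'

/-!
Among the covers `F ⊆ E` take one minimising, lexicographically, the number of links and then
the number of leaf endpoints of its links. If two links `au`, `av` of `F` met at a leaf `a` with
neighbour `b`, both would cover the pendant edge `ab`; so `au` could be dropped (if `u = b`) or
replaced by its shadow `bu`, which is in `E` by shadow-closedness. That gives a cover with fewer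
links, or with as many links and one leaf endpoint fewer since `b` is not a leaf. Hence each leaf
meets exactly one link of `F` (at least one because its pendant edge is covered), and the
leaf-to-leaf links of `F` are pairwise disjoint.
-/

theorem toLex_card_sum_insert_erase_lt {α : Type*} [DecidableEq α] (w : α → ℕ) {s : Finset α}
    {x y : α} (hy : y ∈ s) (hw : w x < w y) :
    toLex ((insert x (s.erase y)).card, ∑ l ∈ insert x (s.erase y), w l) <
      toLex (s.card, ∑ l ∈ s, w l) := by
  have hcard := Finset.card_erase_add_one hy
  have hsum := Finset.sum_erase_add s w hy
  rw [Prod.Lex.toLex_lt_toLex]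
  by_cases hx : x ∈ s.erase y
  · rw [Finset.insert_eq_of_mem hx]
    omega
  · rw [Finset.card_insert_of_notMem hx, Finset.sum_insert hx]
    omega

theorem toLex_card_sum_erase_lt {α : Type*} [DecidableEq α] (w : α → ℕ) {s : Finset α} {y : α}
    (hy : y ∈ s) :
    toLex ((s.erase y).card, ∑ l ∈ s.erase y, w l) < toLex (s.card, ∑ l ∈ s, w l) :=
  Prod.Lex.toLex_lt_toLex.mpr (Or.inl (Finset.card_erase_lt_of_mem hy))

section TreeLinks

variable {V : Type*} {T : SimpleGraph V}

theorem pathEdges_eq_of_isPath (hT : T.IsTree) {x y : V} {p : T.Walk x y} (hp : p.IsPath) :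
    pathEdges T x y = {e | e ∈ p.edges} := by
  ext e
  constructor
  · rintro ⟨q, hq, he⟩
    rwa [(hT.existsUnique_path x y).unique hq hp] at he
  · exact fun he => ⟨p, hp, he⟩

theorem pathEdges_comm (x y : V) : pathEdges T x y = pathEdges T y x := by
  ext e
  constructor <;> rintro ⟨p, hp, he⟩ <;> exact ⟨p.reverse, hp.reverse, by simpa using he⟩

theorem pathEdges_self (x : V) : pathEdges T x x = ∅ := by
  ext e
  simp only [pathEdges, Set.mem_empty_iff_false, iff_false]
  rintro ⟨p, hp, he⟩
  rw [SimpleGraph.Walk.isPath_iff_nil.mp hp |>.eq_nil] at he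
  simp at he

theorem covers_mk_iff {u v : V} {e : Sym2 V} : Covers T s(u, v) e ↔ e ∈ pathEdges T u v := by
  refine ⟨?_, fun he => ⟨u, v, rfl, he⟩⟩
  rintro ⟨u', v', huv, he⟩
  rcases Sym2.eq_iff.mp huv with ⟨rfl, rfl⟩ | ⟨rfl, rfl⟩
  · exact he
  · rwa [pathEdges_comm]

theorem not_isLeaf_of_adj_of_adj {b x z : V} (hx : T.Adj b x) (hz : T.Adj b z) (hxz : x ≠ z) :
    ¬ IsLeaf T b := fun ⟨_, _, hn⟩ => hxz ((hn x hx).trans (hn z hz).symm)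

theorem IsLeaf.eq_or_eq_of_mem_support {a : V} (ha : IsLeaf T a) :
    ∀ {x y : V} (p : T.Walk x y), p.IsPath → a ∈ p.support → a = x ∨ a = y
  | _, _, .nil, _, h => Or.inl (by simpa using h)
  | x, _, .cons h p, hp, hmem => by
    rcases List.mem_cons.mp (SimpleGraph.Walk.support_cons h p ▸ hmem) with rfl | hmem
    · exact Or.inl rfl
    rcases ha.eq_or_eq_of_mem_support p hp.of_cons hmem with rfl | rfl
    · cases p with
      | nil => exact Or.inr rfl
      | cons h' p' =>
        have hx : x ∉ (SimpleGraph.Walk.cons h' p').support :=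
          ((SimpleGraph.Walk.cons_isPath_iff _ _).mp hp).2
        -- an interior vertex of a path has two distinct neighbours on it
        exact absurd ha (not_isLeaf_of_adj_of_adj h.symm h' fun hxz => hx (by simp [hxz]))
    · exact Or.inr rfl

theorem IsLeaf.mem_of_covers {a b : V} (ha : IsLeaf T a) {l : Sym2 V}
    (hl : Covers T l s(a, b)) : a ∈ l := by
  obtain ⟨u, v, rfl, p, hp, he⟩ := hl
  rcases ha.eq_or_eq_of_mem_support p hp (p.fst_mem_support_of_mem_edges he) with rfl | rfl
  · exact Sym2.mem_mk_left _ _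
  · exact Sym2.mem_mk_right _ _

theorem IsLeaf.mk_notMem_pathEdges {a b u : V} (ha : IsLeaf T a) (hab : T.Adj a b)
    (hua : u ≠ a) : s(a, b) ∉ pathEdges T b u := by
  rintro ⟨p, hp, he⟩
  rcases ha.eq_or_eq_of_mem_support p hp (p.fst_mem_support_of_mem_edges he) with h | h
  · exact hab.ne h
  · exact hua h.symm

theorem IsLeaf.pathEdges_eq_insert (hT : T.IsTree) {a b u : V} (ha : IsLeaf T a)
    (hab : T.Adj a b) (hua : u ≠ a) : pathEdges T a u = insert s(a, b) (pathEdges T b u) := by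
  obtain ⟨p, hp, -⟩ := hT.existsUnique_path a u
  obtain ⟨b', hab', p', rfl⟩ := p.exists_eq_cons_of_ne hua.symm
  obtain rfl : b' = b := ha.unique hab' hab
  rw [pathEdges_eq_of_isPath hT hp, pathEdges_eq_of_isPath hT hp.of_cons]
  ext e
  simp

theorem IsLeaf.not_isLeaf_of_adj (hT : T.IsTree) {a b u : V} (ha : IsLeaf T a) (hab : T.Adj a b)
    (hua : u ≠ a) (hub : u ≠ b) : ¬ IsLeaf T b := by
  obtain ⟨p, hp, -⟩ := hT.existsUnique_path b u
  obtain ⟨z, hbz, p', rfl⟩ := p.exists_eq_cons_of_ne hub.symm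
  have hza : z ≠ a := by
    rintro rfl
    exact ha.mk_notMem_pathEdges hab hua ⟨_, hp, by simp [Sym2.eq_swap]⟩
  exact not_isLeaf_of_adj_of_adj hab.symm hbz hza.symm

theorem CoversTree.of_insert_diag {F : Set (Sym2 V)} {x : V}
    (hF : CoversTree T (insert s(x, x) F)) : CoversTree T F := by
  intro e he
  obtain ⟨l, hl, hle⟩ := hF e he
  rcases hl with rfl | hl
  · simp [covers_mk_iff, pathEdges_self] at hle
  · exact ⟨l, hl, hle⟩

theorem CoversTree.insert_erase_of_isLeaf [DecidableEq V] (hT : T.IsTree) {F : Finset (Sym2 V)}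
    (hF : CoversTree T ↑F) {a b u v : V} (ha : IsLeaf T a) (hab : T.Adj a b)
    (hav : s(a, v) ∈ F) (huv : u ≠ v) (hua : u ≠ a) (hva : v ≠ a) :
    CoversTree T ↑(insert s(b, u) (F.erase s(a, u))) := by
  intro e he
  obtain ⟨l, hl, hle⟩ := hF e he
  by_cases hlau : l = s(a, u)
  swap
  · exact ⟨l, by simp [hlau, hl], hle⟩
  subst hlau
  rw [covers_mk_iff, ha.pathEdges_eq_insert hT hab hua] at hle
  rcases hle with rfl | hle
  · refine ⟨s(a, v), by simp [hav, hva, huv.symm], covers_mk_iff.mpr ?_⟩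
    rw [ha.pathEdges_eq_insert hT hab hva]
    exact Set.mem_insert _ _
  · exact ⟨s(b, u), by simp, covers_mk_iff.mpr hle⟩

end TreeLinks

section Leaves

variable {V : Type*} {T : SimpleGraph V}

noncomputable def leafWeight (T : SimpleGraph V) : Sym2 V → ℕ :=
  Sym2.lift ⟨fun x y => (if IsLeaf T x then 1 else 0) + (if IsLeaf T y then 1 else 0),
    fun _ _ => add_comm _ _⟩

theorem leafWeight_mk_lt {a b u : V} (ha : IsLeaf T a) (hb : ¬ IsLeaf T b) :
    leafWeight T s(b, u) < leafWeight T s(a, u) := by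
  simp only [leafWeight, Sym2.lift_mk, if_pos ha, if_neg hb]
  omega

theorem exists_cover_lt_of_isLeaf_mem_mem [DecidableEq V] (hT : T.IsTree)
    {E F : Finset (Sym2 V)} (hlinks : ∀ l ∈ E, ¬ l.IsDiag) (hE : ShadowClosed T E) (hFE : F ⊆ E)
    (hF : CoversTree T ↑F) {a : V} (ha : IsLeaf T a) {l₁ l₂ : Sym2 V} (hl₁ : l₁ ∈ F)
    (hl₂ : l₂ ∈ F) (hal₁ : a ∈ l₁) (hal₂ : a ∈ l₂) (hne : l₁ ≠ l₂) :
    ∃ F' ⊆ E, CoversTree T ↑F' ∧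
      toLex (F'.card, ∑ l ∈ F', leafWeight T l) < toLex (F.card, ∑ l ∈ F, leafWeight T l) := by
  obtain ⟨u, rfl⟩ := Sym2.mem_iff_exists.mp hal₁
  obtain ⟨v, rfl⟩ := Sym2.mem_iff_exists.mp hal₂
  have hua : u ≠ a := fun h => hlinks _ (hFE hl₁) (by simp [h])
  have hva : v ≠ a := fun h => hlinks _ (hFE hl₂) (by simp [h])
  have huv : u ≠ v := fun h => hne (by rw [h])
  obtain ⟨b, hab⟩ := ha.exists
  have hcov := hF.insert_erase_of_isLeaf hT ha hab hl₂ huv hua hva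
  by_cases hub : u = b
  · subst hub
    refine ⟨F.erase s(a, u), (F.erase_subset _).trans hFE, ?_, toLex_card_sum_erase_lt _ hl₁⟩
    rw [Finset.coe_insert] at hcov
    exact hcov.of_insert_diag
  · have hshadow : IsShadow T b u a u := by
      refine ⟨Ne.symm hub, ?_⟩
      rw [ha.pathEdges_eq_insert hT hab hua]
      exact Set.ssubset_insert (ha.mk_notMem_pathEdges hab hua)
    refine ⟨insert s(b, u) (F.erase s(a, u)),
      Finset.insert_subset (hE a u b u (hFE hl₁) hshadow) ((F.erase_subset _).trans hFE),
      hcov, toLex_card_sum_insert_erase_lt _ hl₁ ?_⟩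
    exact leafWeight_mk_lt ha (ha.not_isLeaf_of_adj hT hab hua hub)

end Leaves

theorem statement15_general {V : Type*} [Fintype V] (T : SimpleGraph V) (hT : T.IsTree)
    (E : Finset (Sym2 V))
    (hlinks : ∀ l ∈ E, ¬ l.IsDiag)
    (hE : ShadowClosed T E)
    (hEcov : CoversTree T ↑E) :
    ∃ F ⊆ E, CoversTree T ↑F ∧
      (∀ F' : Finset (Sym2 V), F' ⊆ E → CoversTree T ↑F' → F.card ≤ F'.card) ∧
      (∀ a, IsLeaf T a → degF F a = 1) ∧
      IsMatching (F.filter (fun l => ∀ x ∈ l, IsLeaf T x)) := by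
  let rank : Finset (Sym2 V) → ℕ ×ₗ ℕ := fun G => toLex (G.card, ∑ l ∈ G, leafWeight T l)
  obtain ⟨F, hFcovers, hFmin⟩ :=
    (E.powerset.filter fun G : Finset (Sym2 V) => CoversTree T ↑G).exists_min_image rank
      ⟨E, by simp [hEcov]⟩
  simp only [Finset.mem_filter, Finset.mem_powerset] at hFcovers hFmin
  obtain ⟨hFE, hF⟩ := hFcovers
  have hunique : ∀ a, IsLeaf T a → ∀ l₁ ∈ F, ∀ l₂ ∈ F, a ∈ l₁ → a ∈ l₂ → l₁ = l₂ := by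
    intro a ha l₁ hl₁ l₂ hl₂ hal₁ hal₂
    by_contra hne
    obtain ⟨F', hF'E, hF', hlt⟩ :=
      exists_cover_lt_of_isLeaf_mem_mem hT hlinks hE hFE hF ha hl₁ hl₂ hal₁ hal₂ hne
    exact (hFmin F' ⟨hF'E, hF'⟩).not_gt hlt
  refine ⟨F, hFE, hF, fun F' hF'E hF' => ?_, fun a ha => ?_, fun l hl => hlinks l ?_, ?_⟩
  · exact (Prod.Lex.toLex_le_toLex'.mp (hFmin F' ⟨hF'E, hF'⟩)).1
  · obtain ⟨b, hab⟩ := ha.exists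
    obtain ⟨l, hl, hcov⟩ := hF s(a, b) hab
    refine Finset.card_eq_one.mpr ⟨l, Finset.eq_singleton_iff_unique_mem.mpr ⟨?_, ?_⟩⟩
    · exact Finset.mem_filter.mpr ⟨hl, ha.mem_of_covers hcov⟩
    · exact fun l' hl' => hunique a ha l' (Finset.mem_filter.mp hl').1 l hl
        (Finset.mem_filter.mp hl').2 (ha.mem_of_covers hcov)
  · exact hFE (Finset.mem_filter.mp hl).1
  · intro l hl l' hl' hne x hxl hxl'
    rw [Finset.mem_filter] at hl hl'
    exact hne (hunique x (hl.2 x hxl) l hl.1 l' hl'.1 hxl hxl')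

/-- for a shadow-closed link set `E` covering `T`, there is a
minimum-cardinality feasible `F ⊆ E` with exactly one link of `F` incident to each leaf;
consequently the leaf-to-leaf links of `F` form a matching on the leaves. -/
theorem statement15 {V : Type*} [Fintype V] (T : SimpleGraph V) (hT : T.IsTree) (r : V)
    (hr : ¬ IsLeaf T r) (E : Finset (Sym2 V))
    (hlinks : ∀ l ∈ E, ¬ l.IsDiag)
    (hE : ShadowClosed T E)
    (hEcov : CoversTree T ↑E) :
    ∃ F ⊆ E, CoversTree T ↑F ∧
      (∀ F' : Finset (Sym2 V), F' ⊆ E → CoversTree T ↑F' → F.card ≤ F'.card) ∧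
      (∀ a, IsLeaf T a → degF F a = 1) ∧
      IsMatching (F.filter (fun l => ∀ x ∈ l, IsLeaf T x)) :=
  statement15_general T hT E hlinks hE hEcov
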